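/- Fix $n \geq 2$ and let $\mathbb{S}^{n-1}$ be the unit sphere in $\mathbb{R}^n$. For $\rho \in C^1(\mathbb{S}^{n-1})$ with $\|\rho\|_{C^1} < \delta$ and $z = r_0 \omega_0 \in \mathbb{R}^n$ with $|z| < \varepsilon$, define $f_z(\rho, \omega) = \frac{(1+\rho(\omega))\omega + r_0 \omega_0}{|(1+\rho(\omega))\omega + r_0 \omega_0|}$ for $\omega \in \mathbb{S}^{n-1}$. Then there exist $\varepsilon > 0$ and $\delta > 0$ such that for all such $\rho$ and $z$, the map $\omega \mapsto f_z(\rho, \omega)$ is injective from $\mathbb{S}^{n-1}$ to $\mathbb{S}^{n-1}$. -/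

import Mathlib

/-!
If the normalizations of `g₁ = a • ω₁ + z` and `g₂ = b • ω₂ + z` agree, where `a = 1 + ρ ω₁` and
`b = 1 + ρ ω₂`, then `‖g₁‖ • g₂ = ‖g₂‖ • g₁`; expanding norms on the sphere turns this into
`‖g₁‖ ‖g₂‖ a b ‖ω₁ - ω₂‖² ≤ ‖z‖² ((a - b)² + a b ‖ω₁ - ω₂‖²)`. The mean value theorem along a
great circle bounds `|a - b|` by `(π / 2) δ ‖ω₁ - ω₂‖`, so for small `z` and `δ` the inequality
forces `ω₁ = ω₂`. Antipodal points are ruled out beforehand by the same inequality, using only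
that `|a - b|` is small.
-/

open Real
open scoped RealInnerProductSpace

variable {E : Type*} [NormedAddCommGroup E] [InnerProductSpace ℝ E]

lemma norm_sub_sq_of_norm_eq_one {x y : E} (hx : ‖x‖ = 1) (hy : ‖y‖ = 1) :
    ‖x - y‖ ^ 2 = 2 - 2 * ⟪x, y⟫ := by
  rw [norm_sub_sq_real, hx, hy]; ring

lemma norm_smul_sub_smul_sq {x y : E} (hx : ‖x‖ = 1) (hy : ‖y‖ = 1) (p q : ℝ) :
    ‖p • x - q • y‖ ^ 2 = (p - q) ^ 2 + p * q * ‖x - y‖ ^ 2 := by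
  rw [norm_sub_sq_of_norm_eq_one hx hy, norm_sub_sq_real, real_inner_smul_left,
    real_inner_smul_right, norm_smul, norm_smul, hx, hy, Real.norm_eq_abs, Real.norm_eq_abs]
  simp only [mul_one, sq_abs]
  ring

lemma norm_smul_add_smul_eq_one {x y : E} (hx : ‖x‖ = 1) (hy : ‖y‖ = 1) (hxy : ⟪x, y⟫ = 0)
    {p q : ℝ} (hpq : p ^ 2 + q ^ 2 = 1) : ‖p • x + q • y‖ = 1 := by
  refine (pow_eq_one_iff_of_nonneg (norm_nonneg _) two_ne_zero).1 ?_
  rw [norm_add_sq_real, real_inner_smul_left, real_inner_smul_right, hxy, norm_smul, norm_smul,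
    hx, hy, Real.norm_eq_abs, Real.norm_eq_abs]
  simp only [mul_zero, mul_one, sq_abs]
  linarith

lemma abs_sub_le_mul_along_great_circle {ρ : E → ℝ} (hρ : Differentiable ℝ ρ) {C : ℝ}
    (hC : ∀ ω : E, ‖ω‖ = 1 → ‖fderiv ℝ ρ ω‖ ≤ C) {ω v : E} (hω : ‖ω‖ = 1) (hv : ‖v‖ = 1)
    (hωv : ⟪ω, v⟫ = 0) {α : ℝ} (hα : 0 ≤ α) :
    |ρ (cos α • ω + sin α • v) - ρ ω| ≤ C * α := by
  set γ : ℝ → E := fun θ => cos θ • ω + sin θ • v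
  have hγ : ∀ θ, HasDerivAt γ ((-sin θ) • ω + cos θ • v) θ := fun θ =>
    ((hasDerivAt_cos θ).smul_const ω).add ((hasDerivAt_sin θ).smul_const v)
  have hγ_norm : ∀ θ, ‖γ θ‖ = 1 := fun θ =>
    norm_smul_add_smul_eq_one hω hv hωv (cos_sq_add_sin_sq θ)
  have hγ'_norm : ∀ θ, ‖(-sin θ) • ω + cos θ • v‖ = 1 := fun θ =>
    norm_smul_add_smul_eq_one hω hv hωv (by rw [neg_sq, sin_sq_add_cos_sq])
  have h := norm_image_sub_le_of_norm_deriv_le_segment' (f := ρ ∘ γ)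
    (fun θ _ => ((hρ (γ θ)).hasFDerivAt.comp_hasDerivAt θ (hγ θ)).hasDerivWithinAt)
    (fun θ _ => (ContinuousLinearMap.le_opNorm _ _).trans
      (by rw [hγ'_norm, mul_one]; exact hC _ (hγ_norm θ)))
    α (Set.right_mem_Icc.2 hα)
  simpa [γ] using h

lemma exists_great_circle {ω₁ ω₂ : E} (h₁ : ‖ω₁‖ = 1) (h₂ : ‖ω₂‖ = 1) (hc : |⟪ω₁, ω₂⟫| < 1) :
    ∃ v : E, ‖v‖ = 1 ∧ ⟪ω₁, v⟫ = 0 ∧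
      cos (arccos ⟪ω₁, ω₂⟫) • ω₁ + sin (arccos ⟪ω₁, ω₂⟫) • v = ω₂ := by
  set c := ⟪ω₁, ω₂⟫
  rw [abs_lt] at hc
  set w := ω₂ - c • ω₁
  have hw_sq : ‖w‖ ^ 2 = 1 - c ^ 2 := by
    rw [norm_sub_sq_real, real_inner_smul_right, real_inner_comm, norm_smul, h₁, h₂,
      Real.norm_eq_abs]
    simp only [mul_one, sq_abs]
    ring
  have hw_pos : 0 < ‖w‖ := by nlinarith [norm_nonneg w]
  refine ⟨‖w‖⁻¹ • w, ?_, ?_, ?_⟩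
  · rw [norm_smul, norm_inv, norm_norm, inv_mul_cancel₀ hw_pos.ne']
  · rw [real_inner_smul_right, inner_sub_right, real_inner_smul_right,
      real_inner_self_eq_norm_sq, h₁]
    ring
  · rw [cos_arccos hc.1.le hc.2.le, sin_arccos, ← hw_sq, sqrt_sq (norm_nonneg w), smul_smul,
      mul_inv_cancel₀ hw_pos.ne', one_smul, add_sub_cancel]

lemma arccos_inner_le_mul_norm_sub {ω₁ ω₂ : E} (h₁ : ‖ω₁‖ = 1) (h₂ : ‖ω₂‖ = 1) :
    arccos ⟪ω₁, ω₂⟫ ≤ π / 2 * ‖ω₁ - ω₂‖ := by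
  set α := arccos ⟪ω₁, ω₂⟫
  have hc := abs_real_inner_le_norm ω₁ ω₂
  rw [h₁, h₂, mul_one, abs_le] at hc
  have hα0 : 0 ≤ α := arccos_nonneg _
  have hαπ : α ≤ π := arccos_le_pi _
  have hsin : 0 ≤ sin (α / 2) := sin_nonneg_of_nonneg_of_le_pi (by linarith) (by linarith)
  have hchord : ‖ω₁ - ω₂‖ = 2 * sin (α / 2) := by
    refine (sq_eq_sq₀ (norm_nonneg _) (by positivity)).1 ?_
    rw [norm_sub_sq_of_norm_eq_one h₁ h₂, mul_pow, sin_sq_eq_half_sub,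
      show 2 * (α / 2) = α by ring, cos_arccos hc.1 hc.2]
    ring
  have hjordan := mul_le_sin (x := α / 2) (by linarith) (by linarith)
  rw [hchord]
  calc α = π / 2 * (2 * (2 / π * (α / 2))) := by field_simp
    _ ≤ π / 2 * (2 * sin (α / 2)) := by gcongr

lemma abs_sub_le_of_norm_fderiv_le_on_sphere {ρ : E → ℝ} (hρ : Differentiable ℝ ρ) {C : ℝ}
    (hC : ∀ ω : E, ‖ω‖ = 1 → ‖fderiv ℝ ρ ω‖ ≤ C) {ω₁ ω₂ : E} (h₁ : ‖ω₁‖ = 1) (h₂ : ‖ω₂‖ = 1)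
    (hne : ω₁ ≠ -ω₂) : |ρ ω₂ - ρ ω₁| ≤ C * (π / 2 * ‖ω₁ - ω₂‖) := by
  rcases eq_or_ne ω₁ ω₂ with rfl | heq
  · simp
  have hc : |⟪ω₁, ω₂⟫| < 1 := by
    refine lt_of_le_of_ne (by simpa [h₁, h₂] using abs_real_inner_le_norm ω₁ ω₂) ?_
    rw [Ne, abs_eq zero_le_one, inner_eq_one_iff_of_norm_eq_one h₁ h₂,
      inner_eq_neg_one_iff_of_norm_eq_one h₁ h₂]
    tauto
  obtain ⟨v, hv, hωv, hω₂⟩ := exists_great_circle h₁ h₂ hc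
  calc |ρ ω₂ - ρ ω₁| ≤ C * arccos ⟪ω₁, ω₂⟫ := by
        conv_lhs => rw [← hω₂]
        exact abs_sub_le_mul_along_great_circle hρ hC h₁ hv hωv (arccos_nonneg _)
    _ ≤ C * (π / 2 * ‖ω₁ - ω₂‖) :=
        mul_le_mul_of_nonneg_left (arccos_inner_le_mul_norm_sub h₁ h₂)
          ((norm_nonneg _).trans (hC ω₁ h₁))

lemma abs_sub_norm_le_norm_smul_add {ω : E} (hω : ‖ω‖ = 1) (a : ℝ) (z : E) :
    |a| - ‖z‖ ≤ ‖a • ω + z‖ := by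
  simpa [norm_smul, hω] using norm_sub_norm_le (a • ω) (-z)

lemma mul_norm_sub_sq_le_of_sameRay {ω₁ ω₂ z : E} (h₁ : ‖ω₁‖ = 1) (h₂ : ‖ω₂‖ = 1) {a b : ℝ}
    (h : SameRay ℝ (a • ω₁ + z) (b • ω₂ + z)) :
    ‖a • ω₁ + z‖ * ‖b • ω₂ + z‖ * (a * b) * ‖ω₁ - ω₂‖ ^ 2 ≤
      ‖z‖ ^ 2 * ‖a • ω₁ - b • ω₂‖ ^ 2 := by
  set s₁ := ‖a • ω₁ + z‖
  set s₂ := ‖b • ω₂ + z‖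
  have hz : (s₂ * a) • ω₁ - (s₁ * b) • ω₂ = (s₁ - s₂) • z := by
    linear_combination (norm := module) (sameRay_iff_norm_smul_eq.1 h).symm
  have hs : |s₁ - s₂| = ‖a • ω₁ - b • ω₂‖ := by
    rw [← h.norm_sub, add_sub_add_right_eq_sub]
  have hsq := congrArg (‖·‖ ^ 2) hz
  simp only [norm_smul_sub_smul_sq h₁ h₂, norm_smul, mul_pow, Real.norm_eq_abs, sq_abs] at hsq
  rw [← sq_abs (s₁ - s₂), hs] at hsq
  nlinarith [sq_nonneg (s₂ * a - s₁ * b)]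

lemma eq_of_sameRay_smul_add {ρ : E → ℝ} (hρ : Differentiable ℝ ρ)
    (hρ_small : ∀ ω : E, ‖ω‖ = 1 → |ρ ω| + ‖fderiv ℝ ρ ω‖ < 1 / 100) {z : E}
    (hz : ‖z‖ < 1 / 100) {ω₁ ω₂ : E} (h₁ : ‖ω₁‖ = 1) (h₂ : ‖ω₂‖ = 1)
    (h : SameRay ℝ ((1 + ρ ω₁) • ω₁ + z) ((1 + ρ ω₂) • ω₂ + z)) : ω₁ = ω₂ := by
  have hρ_abs : ∀ ω : E, ‖ω‖ = 1 → |ρ ω| < 1 / 100 := fun ω hω =>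
    (le_add_of_nonneg_right (norm_nonneg _)).trans_lt (hρ_small ω hω)
  have hfderiv : ∀ ω : E, ‖ω‖ = 1 → ‖fderiv ℝ ρ ω‖ ≤ 1 / 100 := fun ω hω =>
    (le_add_of_nonneg_left (abs_nonneg _)).trans (hρ_small ω hω).le
  have hnorm_ge : ∀ ω : E, ‖ω‖ = 1 → 98 / 100 ≤ ‖(1 + ρ ω) • ω + z‖ := fun ω hω => by
    linarith [abs_sub_norm_le_norm_smul_add hω (1 + ρ ω) z, le_abs_self (1 + ρ ω),
      abs_lt.1 (hρ_abs ω hω)]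
  have hsmall₁ := abs_lt.1 (hρ_abs ω₁ h₁)
  have hsmall₂ := abs_lt.1 (hρ_abs ω₂ h₂)
  have hs₁ := hnorm_ge ω₁ h₁
  have hs₂ := hnorm_ge ω₂ h₂
  set d := ‖ω₁ - ω₂‖
  have key := mul_norm_sub_sq_le_of_sameRay h₁ h₂ h
  rw [norm_smul_sub_smul_sq h₁ h₂] at key
  set a := 1 + ρ ω₁
  set b := 1 + ρ ω₂
  have hab_ge : 98 / 100 ≤ a * b := by nlinarith
  have hab_le : a * b ≤ 2 := by nlinarith
  have hz_sq : ‖z‖ ^ 2 ≤ 1 / 10000 := by nlinarith [norm_nonneg z]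
  have hd : 9 / 10 * d ^ 2 ≤ 1 / 10000 * ((a - b) ^ 2 + 2 * d ^ 2) := by
    have hP : 9 / 10 ≤ ‖a • ω₁ + z‖ * ‖b • ω₂ + z‖ * (a * b) :=
      calc (9 / 10 : ℝ) ≤ 98 / 100 * (98 / 100) * (98 / 100) := by norm_num
        _ ≤ _ := by gcongr
    calc 9 / 10 * d ^ 2 ≤ ‖a • ω₁ + z‖ * ‖b • ω₂ + z‖ * (a * b) * d ^ 2 := by gcongr
      _ ≤ ‖z‖ ^ 2 * ((a - b) ^ 2 + a * b * d ^ 2) := key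
      _ ≤ 1 / 10000 * ((a - b) ^ 2 + 2 * d ^ 2) := by gcongr
  have hne : ω₁ ≠ -ω₂ := by
    rintro rfl
    have : d = 2 := by
      simp only [d, sub_eq_add_neg, ← two_smul ℝ, norm_neg, norm_smul, h₂]; norm_num
    nlinarith
  have hLip := abs_sub_le_of_norm_fderiv_le_on_sphere hρ hfderiv h₁ h₂ hne
  have hab_sq : (a - b) ^ 2 ≤ d ^ 2 / 2500 := by
    have : |a - b| ≤ d / 50 := by
      rw [abs_sub_comm, show b - a = ρ ω₂ - ρ ω₁ by ring]
      nlinarith [pi_le_four, norm_nonneg (ω₁ - ω₂)]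
    nlinarith [abs_nonneg (a - b), sq_abs (a - b)]
  have hd0 : d = 0 := by nlinarith [norm_nonneg (ω₁ - ω₂)]
  exact sub_eq_zero.1 (norm_eq_zero.1 hd0)

theorem stmt_5_general (n : ℕ) :
    ∃ ε : ℝ, 0 < ε ∧ ∃ δ : ℝ, 0 < δ ∧
      ∀ ρ : EuclideanSpace ℝ (Fin n) → ℝ, ContDiff ℝ 1 ρ →
        (∀ ω ∈ Metric.sphere (0 : EuclideanSpace ℝ (Fin n)) 1,
          |ρ ω| + ‖fderiv ℝ ρ ω‖ < δ) →
        ∀ z : EuclideanSpace ℝ (Fin n), ‖z‖ < ε →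
          Set.InjOn (fun ω => ‖(1 + ρ ω) • ω + z‖⁻¹ • ((1 + ρ ω) • ω + z))
            (Metric.sphere (0 : EuclideanSpace ℝ (Fin n)) 1) := by
  refine ⟨1 / 100, by norm_num, 1 / 100, by norm_num, ?_⟩
  intro ρ hρ hρ_small z hz ω₁ h₁ ω₂ h₂ heq
  rw [mem_sphere_zero_iff_norm] at h₁ h₂
  exact eq_of_sameRay_smul_add (hρ.differentiable one_ne_zero)
    (fun ω hω => hρ_small ω (mem_sphere_zero_iff_norm.2 hω)) hz h₁ h₂
    (sameRay_iff_inv_norm_smul_eq.2 (Or.inr (Or.inr heq)))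

/-- Injectivity of the angular reparametrization map
`f_z(ρ, ω) = ((1+ρ(ω))ω + z) / |(1+ρ(ω))ω + z|` on the unit sphere, for `ρ` of
small `C¹` norm and small translations `z`. -/
theorem stmt_5 (n : ℕ) (hn : 2 ≤ n) :
    ∃ ε : ℝ, 0 < ε ∧ ∃ δ : ℝ, 0 < δ ∧
      ∀ ρ : EuclideanSpace ℝ (Fin n) → ℝ, ContDiff ℝ 1 ρ →
        (∀ ω ∈ Metric.sphere (0 : EuclideanSpace ℝ (Fin n)) 1,
          |ρ ω| + ‖fderiv ℝ ρ ω‖ < δ) →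
        ∀ z : EuclideanSpace ℝ (Fin n), ‖z‖ < ε →
          Set.InjOn (fun ω => ‖(1 + ρ ω) • ω + z‖⁻¹ • ((1 + ρ ω) • ω + z))
            (Metric.sphere (0 : EuclideanSpace ℝ (Fin n)) 1) :=
  stmt_5_general n
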